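/- arXiv:2212.08293 — 2 statements merged into one kernel-verified Lean document; each statement's English description precedes it below -/
import Mathlib

section
/- Let Q be a simple random walk excursion on ℤ starting and ending at L, conditioned to go right (so its range is contained in [L, ∞)). Let E > L be the maximum value attained by Q. For any site i strictly between L and E, the conditional probability that Q visits i an even number of times (excluding the final return to L), given the parities of the visit counts at all sites in [L, i) and given E, lies strictly between 1/6 and 5/6. -/
open scoped ENNReal

/-- Weight of a nearest-neighbor path: each of its `length - 1` steps has probability 1/2. -/
noncomputable def pathWeight (q : List ℤ) : ℝ≥0∞ := (1/2 : ℝ≥0∞) ^ (q.length - 1)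

/-- Nearest-neighbor path on ℤ. -/
def IsNNPath (q : List ℤ) : Prop := List.Chain' (fun x y => y = x + 1 ∨ y = x - 1) q

/-- A simple random walk excursion from `L`: starts at `L`, ends at its first return to `L`. -/
def IsExcursion (L : ℤ) (q : List ℤ) : Prop :=
  IsNNPath q ∧ q.head? = some L ∧ q.getLast? = some L ∧ 3 ≤ q.length ∧
    ∀ x ∈ q.dropLast.tail, x ≠ L

/-- An excursion to the right: all sites visited are ≥ L. -/
def IsRightExcursion (L : ℤ) (q : List ℤ) : Prop :=
  IsExcursion L q ∧ ∀ x ∈ q, L ≤ x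

/-- Local time at `i`: number of visits, excluding the final return point. -/
def localTime (q : List ℤ) (i : ℤ) : ℕ := q.dropLast.count i

/-- Parity of the local time at `i`. -/
def parity (q : List ℤ) (i : ℤ) : ℕ := localTime q i % 2

/-!
Inserting the loop `i → i + 1 → i` at the first visit of `i` is an injective map which, since
`L < i < E`, sends right excursions from `L` with maximum `E` to right excursions from `L` with
maximum `E`, changes local times only at `i` and `i + 1`, flips the parity at `i`, and divides the
weight by `4`. So the weights `N` of the even and `M` of the odd event satisfy `N ≤ 4 M` and
`M ≤ 4 N`, whence `1/5 ≤ N / (N + M) ≤ 4/5`. The total weight is finite: the step sequences of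
excursions form a prefix-free binary code, so by the Kraft–McMillan inequality it is at most `1`.
-/

open InformationTheory

theorem uniquelyDecodable_of_prefixFree {α : Type*} {S : Set (List α)} (hnil : [] ∉ S)
    (hS : ∀ u ∈ S, ∀ v ∈ S, u <+: v → u = v) : UniquelyDecodable S := by
  intro L₁
  induction L₁ with
  | nil =>
    rintro (_ | ⟨w, L₂⟩) - h₂ h
    · rfl
    · have hw : w = [] := by simp_all
      exact absurd (hw ▸ h₂ w List.mem_cons_self) hnil
  | cons w L₁ ih =>
    rintro (_ | ⟨w', L₂⟩) h₁ h₂ h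
    · have hw : w = [] := by simp_all
      exact absurd (hw ▸ h₁ w List.mem_cons_self) hnil
    · simp only [List.flatten_cons] at h
      have hw₁ := h₁ w List.mem_cons_self
      have hw₂ := h₂ w' List.mem_cons_self
      obtain rfl : w = w' := by
        rcases List.prefix_or_prefix_of_prefix (List.prefix_append w _)
            (h ▸ List.prefix_append w' _) with hp | hp
        · exact hS w hw₁ w' hw₂ hp
        · exact (hS w' hw₂ w hw₁ hp).symm
      rw [ih L₂ (fun x hx => h₁ x (List.mem_cons_of_mem _ hx))
        (fun x hx => h₂ x (List.mem_cons_of_mem _ hx)) (List.append_cancel_left h)]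

theorem tsum_indicator_inv_card_pow_length_le_one {α : Type*} [Fintype α] [Nonempty α]
    {S : Set (List α)} (hS : UniquelyDecodable S) :
    ∑' w, S.indicator (fun w => (Fintype.card α : ℝ≥0∞)⁻¹ ^ w.length) w ≤ 1 := by
  classical
  refine ENNReal.summable.tsum_le_of_sum_le fun s => ?_
  have hT : UniquelyDecodable (↑(s.filter (· ∈ S)) : Set (List α)) :=
    fun L₁ L₂ h₁ h₂ => hS L₁ L₂ (fun w hw => (Finset.mem_filter.1 (h₁ w hw)).2)
      (fun w hw => (Finset.mem_filter.1 (h₂ w hw)).2)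
  have hcard : (Fintype.card α : ℝ≥0∞)⁻¹ = ENNReal.ofReal (1 / Fintype.card α) := by
    rw [one_div, ENNReal.ofReal_inv_of_pos (by exact_mod_cast Fintype.card_pos),
      ENNReal.ofReal_natCast]
  calc ∑ w ∈ s, S.indicator (fun w => (Fintype.card α : ℝ≥0∞)⁻¹ ^ w.length) w
      = ENNReal.ofReal (∑ w ∈ s.filter (· ∈ S), (1 / Fintype.card α : ℝ) ^ w.length) := by
        rw [ENNReal.ofReal_sum_of_nonneg (fun _ _ => by positivity), Finset.sum_filter]
        refine Finset.sum_congr rfl fun w _ => ?_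
        rw [Set.indicator_apply, hcard, ← ENNReal.ofReal_pow (by positivity)]
    _ ≤ ENNReal.ofReal 1 := ENNReal.ofReal_le_ofReal (kraft_mcmillan_inequality hT)
    _ = 1 := ENNReal.ofReal_one

def pathSteps : List ℤ → List Bool
  | x :: y :: t => decide (y = x + 1) :: pathSteps (y :: t)
  | _ => []

theorem length_pathSteps : ∀ q : List ℤ, (pathSteps q).length = q.length - 1
  | [] | [_] => rfl
  | x :: y :: t => by simp [pathSteps, length_pathSteps (y :: t)]

theorem IsNNPath.prefix_of_pathSteps_prefix : ∀ {q q' : List ℤ}, IsNNPath q → IsNNPath q' →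
    q.head? = q'.head? → pathSteps q <+: pathSteps q' → q <+: q'
  | [], _, _, _, _, _ => List.nil_prefix
  | [_], [], _, _, hh, _ => by simp at hh
  | [_], _ :: _, _, _, hh, _ => by simp_all
  | _ :: _ :: _, [], _, _, hh, _ => by simp at hh
  | _ :: _ :: _, [_], _, _, _, hs => by simp [pathSteps] at hs
  | x :: a :: t, y :: b :: t', hq, hq', hh, hs => by
    obtain rfl : x = y := by simpa using hh
    simp only [pathSteps, List.cons_prefix_cons] at hs
    obtain ⟨hxa, hq⟩ := List.isChain_cons_cons.1 hq
    obtain ⟨hxb, hq'⟩ := List.isChain_cons_cons.1 hq'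
    obtain rfl : a = b := by
      rcases hxa with rfl | rfl <;> rcases hxb with rfl | rfl <;> simp_all
    exact List.cons_prefix_cons.2 ⟨rfl, IsNNPath.prefix_of_pathSteps_prefix hq hq' rfl hs.2⟩

/- A proper extension `q'` of `q` would be at `L` at time `q.length - 1`, before its end. -/
theorem IsExcursion.eq_of_prefix {L : ℤ} {q q' : List ℤ} (hq : IsExcursion L q)
    (hq' : IsExcursion L q') (h : q <+: q') : q = q' := by
  refine h.eq_of_length_le (not_lt.1 fun hlt => ?_)
  obtain ⟨-, -, hlast, hlen, -⟩ := hq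
  obtain ⟨-, -, -, -, hint⟩ := hq'
  have hL : q'[q.length - 1] = L := by
    rw [← h.getElem (by omega)]
    simpa [List.getLast?_eq_getElem?,
      List.getElem?_eq_getElem (by omega : q.length - 1 < q.length)] using hlast
  refine hint _ ?_ hL
  have : q'.dropLast.tail[q.length - 2]'(by simp; omega) = q'[q.length - 1] := by
    simp only [List.getElem_tail, List.getElem_dropLast]
    congr 1
    omega
  exact this ▸ List.getElem_mem _

theorem tsum_indicator_isExcursion_pathWeight_le_one (L : ℤ) :
    ∑' q, {q | IsExcursion L q}.indicator pathWeight q ≤ 1 := by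
  set X := {q | IsExcursion L q}
  set g : List Bool → ℝ≥0∞ := fun w => (Fintype.card Bool : ℝ≥0∞)⁻¹ ^ w.length
  have hprefix : ∀ q ∈ X, ∀ q' ∈ X, pathSteps q <+: pathSteps q' → q = q' :=
    fun q hq q' hq' h => hq.eq_of_prefix hq'
      (hq.1.prefix_of_pathSteps_prefix hq'.1 (hq.2.1.trans hq'.2.1.symm) h)
  have hcode : UniquelyDecodable (pathSteps '' X) := by
    refine uniquelyDecodable_of_prefixFree ?_ ?_
    · rintro ⟨q, hq, hnil⟩
      have hlen := congrArg List.length hnil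
      rw [length_pathSteps, List.length_nil] at hlen
      have := hq.2.2.2.1
      omega
    · rintro _ ⟨q, hq, rfl⟩ _ ⟨q', hq', rfl⟩ h
      rw [hprefix q hq q' hq' h]
  have hinj : Function.Injective (fun q : X => pathSteps q) := fun q q' h =>
    Subtype.ext (hprefix q q.2 q' q'.2 (by rw [show pathSteps q = pathSteps q' from h]))
  calc ∑' q, X.indicator pathWeight q = ∑' q : X, pathWeight q := (tsum_subtype X _).symm
    _ = ∑' q : X, (pathSteps '' X).indicator g (pathSteps q) := by
        refine tsum_congr fun q => ?_
        rw [Set.indicator_of_mem (Set.mem_image_of_mem _ q.2)]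
        simp [g, pathWeight, length_pathSteps]
    _ ≤ ∑' w, (pathSteps '' X).indicator g w := ENNReal.tsum_comp_le_tsum_of_injective hinj _
    _ ≤ 1 := tsum_indicator_inv_card_pow_length_le_one hcode

section Detour

variable {L E i : ℤ} {q A B : List ℤ}

theorem IsNNPath.mem_of_head_le_of_le {a x : ℤ} (hq : IsNNPath q) (hhead : q.head? = some a)
    (ha : a ≤ i) (hx : x ∈ q) (hix : i ≤ x) : i ∈ q := by
  induction q generalizing a with
  | nil => simp at hx
  | cons y t ih =>
    obtain rfl : y = a := by simpa using hhead
    rcases ha.eq_or_lt with rfl | hlt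
    · exact List.mem_cons_self
    rcases List.mem_cons.1 hx with rfl | hx
    · omega
    obtain ⟨b, t, rfl⟩ := List.exists_cons_of_ne_nil (List.ne_nil_of_mem hx)
    obtain ⟨hyb, ht⟩ := List.isChain_cons_cons.1 hq
    exact List.mem_cons_of_mem _ (ih ht rfl (by omega) hx)

theorem IsNNPath.append_loop (h : IsNNPath (A ++ i :: B)) :
    IsNNPath (A ++ i :: (i + 1) :: i :: B) := by
  obtain ⟨hA, hiB, hjoin⟩ := List.isChain_append.1 h
  refine List.isChain_append.2 ⟨hA, ?_, fun x hx y hy => hjoin x hx y (by simpa using hy)⟩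
  exact List.isChain_cons_cons.2
    ⟨Or.inl rfl, List.isChain_cons_cons.2 ⟨Or.inr (by ring), hiB⟩⟩

theorem mem_append_loop {x : ℤ} :
    x ∈ A ++ i :: (i + 1) :: i :: B ↔ x ∈ A ++ i :: B ∨ x = i + 1 := by
  simp only [List.mem_append, List.mem_cons]
  tauto

theorem mem_dropLast_tail_append_loop {x : ℤ}
    (hx : x ∈ (A ++ i :: (i + 1) :: i :: B).dropLast.tail) :
    x ∈ (A ++ i :: B).dropLast.tail ∨ x = i ∨ x = i + 1 := by
  rw [show A ++ i :: (i + 1) :: i :: B = (A ++ [i, i + 1]) ++ i :: B by simp,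
    List.dropLast_append_cons] at hx
  rw [List.dropLast_append_cons]
  rcases A with _ | ⟨a, A⟩
  · rcases B with _ | ⟨b, B⟩
    · simp_all
    · simp at hx ⊢
      tauto
  · simp only [List.cons_append, List.tail_cons, List.mem_append, List.mem_cons] at hx ⊢
    tauto

theorem localTime_append_loop (j : ℤ) :
    localTime (A ++ i :: (i + 1) :: i :: B) j =
      localTime (A ++ i :: B) j + [i, i + 1].count j := by
  rw [localTime, localTime,
    show A ++ i :: (i + 1) :: i :: B = (A ++ [i, i + 1]) ++ i :: B by simp,
    List.dropLast_append_cons, List.dropLast_append_cons]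
  simp only [List.count_append]
  ring

theorem parity_append_loop_of_lt {j : ℤ} (hj : j < i) :
    parity (A ++ i :: (i + 1) :: i :: B) j = parity (A ++ i :: B) j := by
  rw [parity, parity, localTime_append_loop, List.count_eq_zero.2 (by simp; omega), add_zero]

theorem parity_append_loop_self_eq_zero_iff :
    parity (A ++ i :: (i + 1) :: i :: B) i = 0 ↔ parity (A ++ i :: B) i ≠ 0 := by
  rw [parity, parity, localTime_append_loop, show [i, i + 1].count i = 1 by simp]
  omega

theorem pathWeight_eq_four_mul_pathWeight_append_loop :
    pathWeight (A ++ i :: B) = 4 * pathWeight (A ++ i :: (i + 1) :: i :: B) := by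
  have h4 : (4 : ℝ≥0∞) * (1 / 2) ^ 2 = 1 := by
    rw [one_div, ← ENNReal.inv_pow, show (2 : ℝ≥0∞) ^ 2 = 4 by norm_num,
      ENNReal.mul_inv_cancel] <;> norm_num
  simp only [pathWeight, List.length_append, List.length_cons]
  rw [show A.length + (B.length + 1 + 1 + 1) - 1 = A.length + (B.length + 1) - 1 + 2 by omega,
    pow_add, ← mul_assoc, mul_comm 4, mul_assoc, h4, mul_one]

def detour (i : ℤ) (q : List ℤ) : List ℤ :=
  q.takeWhile (· != i) ++ i :: (i + 1) :: q.dropWhile (· != i)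

theorem detour_injective (i : ℤ) : Function.Injective (detour i) := by
  have hinv : ∀ q,
      q = (detour i q).takeWhile (· != i) ++ ((detour i q).dropWhile (· != i)).drop 2 := by
    intro q
    have hA : ∀ a ∈ q.takeWhile (· != i), (a != i) = true :=
      fun a ha => List.mem_takeWhile_imp (p := (· != i)) ha
    simp [detour, List.takeWhile_append_of_pos hA, List.dropWhile_append_of_pos hA]
  intro q q' h
  rw [hinv q, hinv q', h]

theorem exists_detour_eq (h : i ∈ q) :
    ∃ A B, q = A ++ i :: B ∧ detour i q = A ++ i :: (i + 1) :: i :: B := by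
  obtain ⟨B, hB⟩ : ∃ B, q.dropWhile (· != i) = i :: B := by
    have hne : q.dropWhile (· != i) ≠ [] := by
      intro hD
      have hq := List.takeWhile_append_dropWhile (p := (· != i)) (l := q)
      rw [hD, List.append_nil] at hq
      have hi := List.mem_takeWhile_imp (p := (· != i)) (hq ▸ h)
      simp at hi
    have hhead : (q.dropWhile (· != i)).head hne = i := by
      simpa using List.head_dropWhile_not (· != i) hne
    exact ⟨_, hhead ▸ (List.cons_head_tail hne).symm⟩
  refine ⟨q.takeWhile (· != i), B, ?_, by rw [detour, hB]⟩
  rw [← hB, List.takeWhile_append_dropWhile]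

theorem detour_spec (hLi : L < i) (hiE : i < E) (hq : IsRightExcursion L q)
    (hmax : q.maximum = E) :
    IsRightExcursion L (detour i q) ∧ (detour i q).maximum = E ∧
      (∀ j < i, parity (detour i q) j = parity q j) ∧
      (parity (detour i q) i = 0 ↔ parity q i ≠ 0) ∧
      pathWeight q = 4 * pathWeight (detour i q) := by
  obtain ⟨⟨hnn, hhead, hlast, hlen, hint⟩, hge⟩ := hq
  obtain ⟨hE, hleE⟩ := List.maximum_eq_coe_iff.1 hmax
  obtain ⟨A, B, rfl, hd⟩ := exists_detour_eq (hnn.mem_of_head_le_of_le hhead hLi.le hE hiE.le)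
  rw [hd]
  refine ⟨⟨⟨hnn.append_loop, by simpa using hhead, by simpa using hlast,
    by simp at hlen ⊢; omega, fun x hx => ?_⟩, fun x hx => ?_⟩,
    List.maximum_eq_coe_iff.2 ⟨mem_append_loop.2 (Or.inl hE), fun x hx => ?_⟩,
    fun _ => parity_append_loop_of_lt, parity_append_loop_self_eq_zero_iff,
    pathWeight_eq_four_mul_pathWeight_append_loop⟩
  · rcases mem_dropLast_tail_append_loop hx with hx | rfl | rfl
    · exact hint x hx
    · omega
    · omega
  · rcases mem_append_loop.1 hx with hx | rfl
    · exact hge x hx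
    · omega
  · rcases mem_append_loop.1 hx with hx | rfl
    · exact hleE x hx
    · omega

end Detour

theorem tsum_indicator_le_mul_of_injective {α β : Type*} {f : α → β} (hf : f.Injective)
    {s : Set α} {t : Set β} {v : α → ℝ≥0∞} {w : β → ℝ≥0∞} {c : ℝ≥0∞}
    (hst : Set.MapsTo f s t) (hvw : ∀ x ∈ s, v x ≤ c * w (f x)) :
    ∑' x, s.indicator v x ≤ c * ∑' y, t.indicator w y :=
  calc ∑' x, s.indicator v x ≤ ∑' x, c * t.indicator w (f x) := by
        refine ENNReal.tsum_le_tsum fun x => ?_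
        by_cases hx : x ∈ s
        · simpa [hx, hst hx] using hvw x hx
        · simp [hx]
    _ = c * ∑' x, t.indicator w (f x) := ENNReal.tsum_mul_left
    _ ≤ c * ∑' y, t.indicator w y := by
        gcongr
        exact ENNReal.tsum_comp_le_tsum_of_injective hf _

theorem one_sixth_lt_div_add_and_div_add_lt_five_sixths {N M : ℝ≥0∞} (hNM : N ≤ 4 * M)
    (hMN : M ≤ 4 * N) (hne : N + M ≠ 0) (htop : N + M ≠ ⊤) :
    1 / 6 < N / (N + M) ∧ N / (N + M) < 5 / 6 := by
  lift N to NNReal using ne_top_of_le_ne_top htop le_self_add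
  lift M to NNReal using ne_top_of_le_ne_top htop le_add_self
  have hne' : N + M ≠ 0 := by exact_mod_cast hne
  have h₁ : (N : ℝ) ≤ 4 * M := by exact_mod_cast hNM
  have h₂ : (M : ℝ) ≤ 4 * N := by exact_mod_cast hMN
  have hpos : (0 : ℝ) < N + M := by exact_mod_cast pos_iff_ne_zero.2 hne'
  rw [← ENNReal.coe_add, ← ENNReal.coe_div hne',
    show (1 / 6 : ℝ≥0∞) = ((1 / 6 : NNReal) : ℝ≥0∞) by simp,
    show (5 / 6 : ℝ≥0∞) = ((5 / 6 : NNReal) : ℝ≥0∞) by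
      rw [ENNReal.coe_div (by norm_num)]; simp,
    ENNReal.coe_lt_coe, ENNReal.coe_lt_coe, ← NNReal.coe_lt_coe, ← NNReal.coe_lt_coe]
  push_cast
  rw [lt_div_iff₀ hpos, div_lt_iff₀ hpos]
  constructor <;> linarith

/-- For a SRW excursion from `L` conditioned to go right, with maximum `E`, and any site
`i` strictly between `L` and `E`, the conditional probability that the excursion visits `i`
an even number of times, given the parities of the local times on `[L, i)` and given `E`,
lies strictly between 1/6 and 5/6. -/
theorem stmt0 (L E i : ℤ) (hLi : L < i) (hiE : i < E) (f : ℤ → ℕ) :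
    ∀ S : Set (List ℤ), S = {q | IsRightExcursion L q ∧ q.maximum = (E : WithBot ℤ) ∧
        ∀ j, L ≤ j → j < i → parity q j = f j} →
    (∑' q : List ℤ, Set.indicator S pathWeight q) ≠ 0 →
      1/6 < (∑' q : List ℤ, Set.indicator (S ∩ {q | parity q i = 0}) pathWeight q) /
              (∑' q : List ℤ, Set.indicator S pathWeight q) ∧
      (∑' q : List ℤ, Set.indicator (S ∩ {q | parity q i = 0}) pathWeight q) /
              (∑' q : List ℤ, Set.indicator S pathWeight q) < 5/6 := by
  intro S hS hD
  set P : Set (List ℤ) := {q | parity q i = 0}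
  have hdetour : ∀ q ∈ S, detour i q ∈ S ∧ (detour i q ∈ P ↔ q ∉ P) ∧
      pathWeight q = 4 * pathWeight (detour i q) := by
    subst hS
    rintro q ⟨hq, hmax, hpar⟩
    obtain ⟨hq', hmax', hparlt, hpari, hw⟩ := detour_spec hLi hiE hq hmax
    exact ⟨⟨hq', hmax', fun j hLj hji => (hparlt j hji).trans (hpar j hLj hji)⟩, hpari, hw⟩
  have hsplit : ∑' q, S.indicator pathWeight q =
      ∑' q, (S ∩ P).indicator pathWeight q + ∑' q, (S \ P).indicator pathWeight q := by
    rw [← ENNReal.tsum_add, ← Set.indicator_union_of_disjoint Set.disjoint_sdiff_inter.symm,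
      Set.inter_union_sdiff]
  have hN := tsum_indicator_le_mul_of_injective (s := S ∩ P) (t := S \ P)
    (detour_injective i)
    (fun q hq => ⟨(hdetour q hq.1).1, fun h => (hdetour q hq.1).2.1.1 h hq.2⟩)
    (fun q hq => (hdetour q hq.1).2.2.le)
  have hM := tsum_indicator_le_mul_of_injective (s := S \ P) (t := S ∩ P)
    (detour_injective i)
    (fun q hq => ⟨(hdetour q hq.1).1, (hdetour q hq.1).2.1.2 hq.2⟩)
    (fun q hq => (hdetour q hq.1).2.2.le)
  have htop : ∑' q, S.indicator pathWeight q ≠ ⊤ := by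
    refine ne_top_of_le_ne_top ENNReal.one_ne_top ?_
    calc ∑' q, S.indicator pathWeight q ≤ ∑' q, {q | IsExcursion L q}.indicator pathWeight q :=
          ENNReal.tsum_le_tsum fun q => Set.indicator_le_indicator_of_subset
            (fun q hq => (hS ▸ hq).1.1) (fun _ => zero_le) q
      _ ≤ 1 := tsum_indicator_isExcursion_pathWeight_le_one L
  rw [hsplit] at hD htop ⊢
  exact one_sixth_lt_div_add_and_div_add_lt_five_sixths hN hM hD htop
end

section
/- For any n ≥ 1 and 0 < ε ≤ 1/2 with εn an integer, the sum of binomial coefficients S = Σ_{i=0}^{εn} C(n, i) satisfies log S ≤ H(ε)·n, where H is the binary entropy function with natural logarithm. -/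
/-!
Weigh the binomial expansion of `1 = (p + (1 - p)) ^ n` at `p = k / n ≤ 1 / 2`: since `p ≤ 1 - p`,
each term `C(n, i) p ^ i (1 - p) ^ (n - i)` with `i ≤ k` is at least `C(n, i) p ^ k (1 - p) ^ (n - k)`,
so the ball sum is at most `p ^ (-k) (1 - p) ^ (-(n - k)) = exp (n H(p))`.
-/

open Real Finset

section

variable {p : ℝ}

lemma pow_mul_one_sub_pow_le_pow_mul_one_sub_pow (hp : 0 ≤ p) (hp' : p ≤ 1 - p)
    {n i k : ℕ} (hik : i ≤ k) (hkn : k ≤ n) :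
    p ^ k * (1 - p) ^ (n - k) ≤ p ^ i * (1 - p) ^ (n - i) := by
  have hpow : p ^ (k - i) ≤ (1 - p) ^ (k - i) := pow_le_pow_left₀ hp hp' _
  calc p ^ k * (1 - p) ^ (n - k) = p ^ i * p ^ (k - i) * (1 - p) ^ (n - k) := by
        rw [← pow_add, Nat.add_sub_cancel' hik]
    _ ≤ p ^ i * (1 - p) ^ (k - i) * (1 - p) ^ (n - k) :=
        mul_le_mul_of_nonneg_right (mul_le_mul_of_nonneg_left hpow (by positivity))
          (pow_nonneg (by linarith) _)
    _ = p ^ i * (1 - p) ^ (n - i) := by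
        rw [mul_assoc, ← pow_add]; congr 2; omega

lemma sum_range_choose_mul_pow_mul_one_sub_pow_le_one (hp : 0 ≤ p) (hp' : p ≤ 1 - p)
    {n k : ℕ} (hkn : k ≤ n) :
    (∑ i ∈ range (k + 1), (n.choose i : ℝ)) * (p ^ k * (1 - p) ^ (n - k)) ≤ 1 := by
  have hp1 : 0 ≤ 1 - p := by linarith
  calc (∑ i ∈ range (k + 1), (n.choose i : ℝ)) * (p ^ k * (1 - p) ^ (n - k))
      ≤ ∑ i ∈ range (k + 1), p ^ i * (1 - p) ^ (n - i) * n.choose i := by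
        rw [sum_mul]
        refine sum_le_sum fun i hi ↦ ?_
        rw [mul_comm]
        exact mul_le_mul_of_nonneg_right (pow_mul_one_sub_pow_le_pow_mul_one_sub_pow hp hp'
          (Nat.lt_succ_iff.mp (mem_range.mp hi)) hkn) (n.choose i).cast_nonneg
    _ ≤ ∑ i ∈ range (n + 1), p ^ i * (1 - p) ^ (n - i) * n.choose i :=
        sum_le_sum_of_subset_of_nonneg (range_subset_range.mpr (by omega))
          fun _ _ _ ↦ by positivity
    _ = 1 := by rw [← add_pow, add_sub_cancel, one_pow]

lemma log_sum_range_choose_le (hp : 0 < p) (hp' : p ≤ 1 - p) {n k : ℕ} (hkn : k ≤ n) :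
    log (∑ i ∈ range (k + 1), (n.choose i : ℝ)) ≤ -(k * log p) - (n - k) * log (1 - p) := by
  have hp1 : 0 < 1 - p := by linarith
  have hS : 0 < ∑ i ∈ range (k + 1), (n.choose i : ℝ) :=
    one_pos.trans_le <| by
      simpa using single_le_sum (fun i _ ↦ (n.choose i).cast_nonneg (α := ℝ))
        (mem_range.mpr k.succ_pos)
  have hprod := log_nonpos (by positivity)
    (sum_range_choose_mul_pow_mul_one_sub_pow_le_one hp.le hp' hkn)
  rw [log_mul hS.ne' (by positivity), log_mul (by positivity) (by positivity), log_pow, log_pow,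
    Nat.cast_sub hkn] at hprod
  linarith

lemma log_sum_range_choose_le_mul_binEntropy {n k : ℕ} (hk : 0 < k) (h2 : 2 * k ≤ n) :
    log (∑ i ∈ range (k + 1), (n.choose i : ℝ)) ≤ n * binEntropy (k / n) := by
  have hn : (0 : ℝ) < n := by norm_cast; omega
  have hp : (0 : ℝ) < k / n := by positivity
  have hp' : (k / n : ℝ) ≤ 1 - k / n := by
    rw [div_le_iff₀ hn, sub_mul, div_mul_cancel₀ _ hn.ne']
    have : (2 * k : ℝ) ≤ n := by exact_mod_cast h2
    linarith
  refine (log_sum_range_choose_le hp hp' (by omega)).trans_eq ?_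
  rw [binEntropy, log_inv, log_inv]
  field_simp
  ring

end

theorem stmt6_general (n k : ℕ) (hk : 0 < k) (h2 : 2 * k ≤ n) :
    Real.log (∑ i ∈ Finset.range (k + 1), (n.choose i : ℝ)) ≤
      (-(k / n : ℝ) * Real.log (k / n) - (1 - k / n) * Real.log (1 - k / n)) * n := by
  refine (log_sum_range_choose_le_mul_binEntropy hk h2).trans_eq ?_
  rw [binEntropy, log_inv, log_inv]
  ring

/-- Entropy bound on Hamming balls: for `n ≥ 1` and `0 < ε ≤ 1/2` with `εn = k` an integer,
`log (Σ_{i=0}^{k} C(n,i)) ≤ H(k/n)·n` where `H` is the binary entropy (natural log). -/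
theorem stmt6 (n k : ℕ) (hn : 1 ≤ n) (hk : 0 < k) (h2 : 2 * k ≤ n) :
    Real.log (∑ i ∈ Finset.range (k + 1), (n.choose i : ℝ)) ≤
      (-(k / n : ℝ) * Real.log (k / n) - (1 - k / n) * Real.log (1 - k / n)) * n :=
  stmt6_general n k hk h2
end
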